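/- Let P: ℝⁿ → ℝ be a harmonic polynomial, homogeneous of degree d ≥ 1 with respect to the origin, and symmetric with respect to a k-dimensional linear subspace V (i.e. P(x+y) = P(x) for all x ∈ ℝⁿ, y ∈ V). Then: (1) P has degree 1 if and only if P is (n−1)-symmetric; (2) if P is not (n−1)-symmetric and P is also homogeneous with respect to some point x ∉ V (i.e. P(y) = Σ_{|β|=d} c_β (y−x)^β for some coefficients c_β), then P is invariant under translations by every vector in span(V ∪ {x}); in particular P is (k+1)-symmetric. -/

import Mathlib

/-!
(1) A homogeneous polynomial of degree one is a nonzero linear form, hence invariant under its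
kernel, a hyperplane. Conversely, invariance under a hyperplane `νᗮ` with `‖ν‖ = 1` forces
`P x = c ⟪ν, x⟫ ^ d` with `c ≠ 0`, whose Laplacian `c d (d - 1) ⟪ν, x⟫ ^ (d - 2)` vanishes only if
`d = 1`.

(2) Comparing homogeneity about `0` with homogeneity about `x` gives `P (y + μ x) = P (y + x)` for
every `μ ≠ 0`; letting `μ → 0` shows that `x` is a period of `P`. The periods of a homogeneous
function form a linear subspace, which therefore contains `span (V ∪ {x})`.
-/

open MeasureTheory Metric Module
open scoped RealInnerProductSpace ENNReal NNReal

noncomputable section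

/-- The Euclidean Laplacian of `u` at `x` (sum of pure second partial derivatives). -/
def laplacian {n : ℕ} (u : EuclideanSpace ℝ (Fin n) → ℝ) (x : EuclideanSpace ℝ (Fin n)) : ℝ :=
  ∑ i, fderiv ℝ (fun y => fderiv ℝ u y (EuclideanSpace.single i 1)) x (EuclideanSpace.single i 1)

/-- `u` is harmonic on `U`: it is `C²` there and its Laplacian vanishes. -/
def IsHarmonicOn {n : ℕ} (u : EuclideanSpace ℝ (Fin n) → ℝ)
    (U : Set (EuclideanSpace ℝ (Fin n))) : Prop :=
  ContDiffOn ℝ 2 u U ∧ ∀ x ∈ U, laplacian u x = 0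

/-- The normalized Almgren frequency `N̄ᵘ(x,r)`; the surface integral is with respect to
the `(n-1)`-dimensional Hausdorff measure on the sphere. -/
def frequency {n : ℕ} (u : EuclideanSpace ℝ (Fin n) → ℝ)
    (x : EuclideanSpace ℝ (Fin n)) (r : ℝ) : ℝ :=
  (r * ∫ y in ball x r, ‖gradient u y‖ ^ 2) /
    ∫ y in sphere x r, (u y - u x) ^ 2 ∂ μH[(n : ℝ) - 1]

/-- The normalized blow-up `T_{x,s}u` of `u` at `x` and scale `s`. -/
def blowup {n : ℕ} (u : EuclideanSpace ℝ (Fin n) → ℝ) (x : EuclideanSpace ℝ (Fin n))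
    (s : ℝ) (y : EuclideanSpace ℝ (Fin n)) : ℝ :=
  (u (x + s • y) - u x) /
    Real.sqrt (⨍ z in sphere (0 : EuclideanSpace ℝ (Fin n)) 1,
      (u (x + s • z) - u x) ^ 2 ∂ μH[(n : ℝ) - 1])

/-- The function on `ℝⁿ` associated to a polynomial in `n` variables. -/
def polyFun {n : ℕ} (P : MvPolynomial (Fin n) ℝ) : EuclideanSpace ℝ (Fin n) → ℝ :=
  fun x => MvPolynomial.eval (fun i => x i) P

/-- A polynomial is `k`-symmetric if it is homogeneous (with respect to the origin) and is
invariant under translations by a `k`-dimensional linear subspace. -/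
def IsKSymmetricPoly {n : ℕ} (P : MvPolynomial (Fin n) ℝ) (k : ℕ) : Prop :=
  (∃ d : ℕ, P.IsHomogeneous d) ∧
    ∃ V : Submodule ℝ (EuclideanSpace ℝ (Fin n)), finrank ℝ V = k ∧
      ∀ x : EuclideanSpace ℝ (Fin n), ∀ y ∈ V, polyFun P (x + y) = polyFun P x

/-- `u` is `(k,ε,s,x)`-symmetric: some `k`-symmetric polynomial `P`, normalized in `L²` of the
unit sphere, is `ε`-close to the blow-up `T_{x,s}u` in the mean-square sense on `B₁(0)`. -/
def SymmetricAt {n : ℕ} (u : EuclideanSpace ℝ (Fin n) → ℝ) (k : ℕ) (ε s : ℝ)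
    (x : EuclideanSpace ℝ (Fin n)) : Prop :=
  ∃ P : MvPolynomial (Fin n) ℝ, IsKSymmetricPoly P k ∧
    (⨍ y in sphere (0 : EuclideanSpace ℝ (Fin n)) 1, (polyFun P y) ^ 2 ∂ μH[(n : ℝ) - 1]) = 1 ∧
    (⨍ y in ball (0 : EuclideanSpace ℝ (Fin n)) 1, (blowup u x s y - polyFun P y) ^ 2) < ε


theorem MvPolynomial.IsHomogeneous.eval_smul {σ R : Type*} [CommSemiring R]
    {φ : MvPolynomial σ R} {d : ℕ} (hφ : φ.IsHomogeneous d) (c : R) (x : σ → R) :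
    MvPolynomial.eval (c • x) φ = c ^ d * MvPolynomial.eval x φ := by
  rw [MvPolynomial.eval_eq, MvPolynomial.eval_eq, Finset.mul_sum]
  refine Finset.sum_congr rfl fun m hm => ?_
  have hdeg : ∑ i ∈ m.support, m i = d := by
    rw [← Finsupp.degree_apply, Finsupp.degree_eq_weight_one]
    exact hφ (MvPolynomial.mem_support_iff.mp hm)
  simp only [Pi.smul_apply, smul_eq_mul, mul_pow, Finset.prod_mul_distrib,
    Finset.prod_pow_eq_pow_sum, hdeg]
  ring

section PolyFun

variable {n : ℕ} {P : MvPolynomial (Fin n) ℝ}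

theorem polyFun_smul {d : ℕ} (hP : P.IsHomogeneous d) (c : ℝ) (x : EuclideanSpace ℝ (Fin n)) :
    polyFun P (c • x) = c ^ d * polyFun P x :=
  hP.eval_smul c _

theorem analyticOnNhd_polyFun (P : MvPolynomial (Fin n) ℝ) : AnalyticOnNhd ℝ (polyFun P) Set.univ :=
  AnalyticOnNhd.eval_continuousLinearMap'
    (fun i => (EuclideanSpace.proj i : EuclideanSpace ℝ (Fin n) →L[ℝ] ℝ)) P

theorem differentiable_polyFun (P : MvPolynomial (Fin n) ℝ) : Differentiable ℝ (polyFun P) :=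
  fun x => (analyticOnNhd_polyFun P x (Set.mem_univ x)).differentiableAt

theorem continuous_polyFun (P : MvPolynomial (Fin n) ℝ) : Continuous (polyFun P) :=
  (differentiable_polyFun P).continuous

theorem polyFun_eq_zero_iff : polyFun P = 0 ↔ P = 0 := by
  refine ⟨fun h => MvPolynomial.funext fun x => ?_, fun h => by ext; simp [h, polyFun]⟩
  simpa [polyFun] using congr_fun h (WithLp.toLp 2 x)

end PolyFun

section Periods

variable {E : Type*} [AddCommGroup E] [Module ℝ E]

def periodSubmodule (f : E → ℝ) {d : ℕ} (hf : ∀ (c : ℝ) (x : E), f (c • x) = c ^ d * f x) :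
    Submodule ℝ E where
  carrier := {v | ∀ y, f (y + v) = f y}
  zero_mem' y := by rw [add_zero]
  add_mem' {v w} hv hw y := by rw [← add_assoc, hw, hv]
  smul_mem' c v hv y := by
    rcases eq_or_ne c 0 with rfl | hc
    · rw [zero_smul, add_zero]
    · calc f (y + c • v) = f (c • (c⁻¹ • y + v)) := by rw [smul_add, smul_inv_smul₀ hc]
        _ = f y := by rw [hf, hv, ← hf, smul_inv_smul₀ hc]

theorem mem_periodSubmodule {f : E → ℝ} {d : ℕ} {hf : ∀ (c : ℝ) (x : E), f (c • x) = c ^ d * f x}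
    {v : E} : v ∈ periodSubmodule f hf ↔ ∀ y, f (y + v) = f y :=
  Iff.rfl

theorem mem_periodSubmodule_of_homogeneous_about [TopologicalSpace E] [ContinuousAdd E]
    [ContinuousSMul ℝ E] {f : E → ℝ} (hcont : Continuous f) {d : ℕ}
    (h0 : ∀ (c : ℝ) (z : E), f (c • z) = c ^ d * f z)
    {x : E} (hx : ∀ (c : ℝ) (z : E), f (x + c • z) = c ^ d * f (x + z)) :
    x ∈ periodSubmodule f h0 := by
  refine mem_periodSubmodule.mpr fun y => ?_
  have hscale : ∀ μ : ℝ, μ ≠ 0 → f (y + μ • x) = f (y + x) := fun μ hμ => by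
    calc f (y + μ • x) = f (μ • (x + μ⁻¹ • y)) := by
          rw [smul_add, smul_inv_smul₀ hμ, add_comm]
      _ = f (y + x) := by
          rw [h0, hx, ← mul_assoc, ← mul_pow, mul_inv_cancel₀ hμ, one_pow, one_mul, add_comm]
  have hline : (fun μ : ℝ => f (y + μ • x)) = fun _ => f (y + x) :=
    Continuous.ext_on (dense_compl_singleton 0) (by fun_prop) continuous_const hscale
  simpa using (congr_fun hline 0).symm

end Periods

theorem fderiv_zero_apply_of_homogeneous_one {E : Type*} [NormedAddCommGroup E] [NormedSpace ℝ E]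
    {f : E → ℝ} (hf : DifferentiableAt ℝ f 0) (h : ∀ (c : ℝ) (x : E), f (c • x) = c * f x)
    (x : E) : fderiv ℝ f 0 x = f x := by
  have hchain : HasDerivAt (fun t : ℝ => f (t • x)) (fderiv ℝ f 0 x) 0 := by
    have := hf.hasFDerivAt.comp_hasDerivAt_of_eq (0 : ℝ) ((hasDerivAt_id (0 : ℝ)).smul_const x)
      (zero_smul ℝ x).symm
    rwa [one_smul] at this
  have hlinear : HasDerivAt (fun t : ℝ => f (t • x)) (f x) 0 := by
    simp_rw [h]
    exact hasDerivAt_mul_const (f x)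
  exact hchain.unique hlinear

theorem isKSymmetricPoly_of_isHomogeneous_one {n : ℕ} {P : MvPolynomial (Fin n) ℝ} (hP : P ≠ 0)
    (h1 : P.IsHomogeneous 1) : IsKSymmetricPoly P (n - 1) := by
  set L := fderiv ℝ (polyFun P) 0
  have hL : ∀ x, L x = polyFun P x := fderiv_zero_apply_of_homogeneous_one
    (differentiable_polyFun P 0) (by simpa using polyFun_smul h1)
  have hL0 : (L : EuclideanSpace ℝ (Fin n) →ₗ[ℝ] ℝ) ≠ 0 := fun h =>
    hP (polyFun_eq_zero_iff.mp (funext fun x => by simpa [← hL] using LinearMap.congr_fun h x))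
  refine ⟨⟨1, h1⟩, LinearMap.ker (L : EuclideanSpace ℝ (Fin n) →ₗ[ℝ] ℝ), ?_, fun x y hy => ?_⟩
  · have := Module.Dual.finrank_ker_add_one_of_ne_zero hL0
    rw [finrank_euclideanSpace_fin] at this
    omega
  · rw [← hL, ← hL, map_add, show L y = 0 from hy, add_zero]

section Hyperplane

variable {E : Type*} [NormedAddCommGroup E] [InnerProductSpace ℝ E]

theorem Submodule.exists_norm_eq_one_orthogonal_span_singleton_eq [FiniteDimensional ℝ E]
    {W : Submodule ℝ E} (hW : finrank ℝ W + 1 = finrank ℝ E) :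
    ∃ ν : E, ‖ν‖ = 1 ∧ (ℝ ∙ ν)ᗮ = W := by
  have hWO : Wᗮ ≠ ⊥ := fun h => by
    rw [Submodule.orthogonal_eq_bot_iff.mp h, finrank_top] at hW
    omega
  obtain ⟨v, hvW, hv0⟩ := Submodule.exists_mem_ne_zero_of_ne_bot hWO
  set ν := ‖v‖⁻¹ • v
  have hν : ‖ν‖ = 1 := norm_smul_inv_norm hv0
  refine ⟨ν, hν, (Submodule.eq_of_le_of_finrank_eq ?_ ?_).symm⟩
  · exact W.le_orthogonal_orthogonal.trans
      (Submodule.orthogonal_le ((Submodule.span_singleton_le_iff_mem ν Wᗮ).mpr (Wᗮ.smul_mem _ hvW)))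
  · have := (ℝ ∙ ν).finrank_add_finrank_orthogonal
    rw [finrank_span_singleton (norm_ne_zero_iff.mp (hν ▸ one_ne_zero))] at this
    omega

theorem eq_mul_inner_pow_of_orthogonal_invariant {f : E → ℝ} {d : ℕ}
    (hf : ∀ (c : ℝ) (x : E), f (c • x) = c ^ d * f x) {ν : E} (hν : ‖ν‖ = 1)
    (hinv : ∀ x, ∀ y ∈ (ℝ ∙ ν)ᗮ, f (x + y) = f x) (x : E) : f x = f ν * ⟪ν, x⟫ ^ d := by
  have hperp : x - ⟪ν, x⟫ • ν ∈ (ℝ ∙ ν)ᗮ := by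
    rw [Submodule.mem_orthogonal_singleton_iff_inner_right, inner_sub_right, real_inner_smul_right,
      real_inner_self_eq_norm_sq, hν]
    ring
  calc f x = f (⟪ν, x⟫ • ν + (x - ⟪ν, x⟫ • ν)) := by rw [add_sub_cancel]
    _ = f ν * ⟪ν, x⟫ ^ d := by rw [hinv _ _ hperp, hf, mul_comm]

end Hyperplane

theorem laplacian_comp_inner {n : ℕ} {g : ℝ → ℝ} (hg : Differentiable ℝ g)
    (hg' : Differentiable ℝ (deriv g)) (ν x : EuclideanSpace ℝ (Fin n)) :
    laplacian (fun y => g ⟪ν, y⟫) x = deriv (deriv g) ⟪ν, x⟫ * ‖ν‖ ^ 2 := by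
  have hfirst : ∀ y, fderiv ℝ (fun y => g ⟪ν, y⟫) y = deriv g ⟪ν, y⟫ • innerSL ℝ ν := fun y =>
    ((hg _).hasDerivAt.comp_hasFDerivAt y (innerSL ℝ ν).hasFDerivAt).fderiv
  have hsecond : ∀ c : ℝ, fderiv ℝ (fun y => deriv g ⟪ν, y⟫ * c) x =
      (c * deriv (deriv g) ⟪ν, x⟫) • innerSL ℝ ν := fun c => by
    rw [← smul_smul]
    exact (((hg' _).hasDerivAt.comp_hasFDerivAt x (innerSL ℝ ν).hasFDerivAt).mul_const c).fderiv
  unfold laplacian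
  simp only [hfirst, hsecond, FunLike.coe_smul, Pi.smul_apply, innerSL_apply_apply, smul_eq_mul]
  rw [← real_inner_self_eq_norm_sq, ← (EuclideanSpace.basisFun (Fin n) ℝ).sum_inner_mul_inner ν ν,
    Finset.mul_sum]
  refine Finset.sum_congr rfl fun i _ => ?_
  rw [EuclideanSpace.basisFun_apply, real_inner_comm _ ν]
  ring

theorem laplacian_const_mul_inner_pow {n : ℕ} (c : ℝ) (d : ℕ) (ν x : EuclideanSpace ℝ (Fin n)) :
    laplacian (fun y => c * ⟪ν, y⟫ ^ d) x = c * (d * (d - 1)) * ⟪ν, x⟫ ^ (d - 2) * ‖ν‖ ^ 2 := by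
  have hg1 : deriv (fun t : ℝ => c * t ^ d) = fun t => c * (d * t ^ (d - 1)) := by
    rw [deriv_const_mul_field']
    simp
  have hg2 : deriv (deriv fun t : ℝ => c * t ^ d) = fun t => c * (d * (d - 1) * t ^ (d - 2)) := by
    rw [deriv_const_mul_field', deriv_const_mul_field']
    funext t
    have := iter_deriv_pow d t 2
    simp only [Finset.prod_range_succ, Finset.prod_range_zero, Nat.cast_zero, Nat.cast_one,
      sub_zero, one_mul] at this
    rw [← this]
    rfl
  refine (laplacian_comp_inner (g := fun t => c * t ^ d) (by fun_prop) (by rw [hg1]; fun_prop)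
    ν x).trans ?_
  rw [hg2]
  ring

theorem eq_one_of_isKSymmetricPoly_sub_one {n d : ℕ} (hn : n ≠ 0) {P : MvPolynomial (Fin n) ℝ}
    (hP : P ≠ 0) (hd : 1 ≤ d) (hhom : P.IsHomogeneous d)
    (hharm : ∀ z, laplacian (polyFun P) z = 0) (hsym : IsKSymmetricPoly P (n - 1)) : d = 1 := by
  obtain ⟨-, W, hW, hinv⟩ := hsym
  obtain ⟨ν, hν, hνW⟩ := Submodule.exists_norm_eq_one_orthogonal_span_singleton_eq (W := W)
    (by rw [hW, finrank_euclideanSpace_fin]; omega)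
  have hform : ∀ x, polyFun P x = polyFun P ν * ⟪ν, x⟫ ^ d :=
    eq_mul_inner_pow_of_orthogonal_invariant (polyFun_smul hhom) hν (hνW ▸ hinv)
  have hc : polyFun P ν ≠ 0 := fun h =>
    hP (polyFun_eq_zero_iff.mp (funext fun x => by rw [hform, h, zero_mul, Pi.zero_apply]))
  have hlap := hharm ν
  rw [funext hform, laplacian_const_mul_inner_pow, real_inner_self_eq_norm_sq, hν] at hlap
  have : (d : ℝ) * (d - 1) = 0 := by simpa [hc] using hlap
  rcases mul_eq_zero.mp this with h | h
  · exact absurd (Nat.cast_eq_zero.mp h) (by omega)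
  · exact_mod_cast sub_eq_zero.mp h

theorem Submodule.finrank_span_union_singleton {K E : Type*} [DivisionRing K] [AddCommGroup E]
    [Module K E] [Module.Finite K E] {V : Submodule K E} {x : E} (hx : x ∉ V) :
    finrank K (span K ((V : Set E) ∪ {x})) = finrank K V + 1 := by
  rw [Submodule.span_union, Submodule.span_eq, Submodule.finrank_sup_span_singleton hx]

theorem polyFun_add_eq_of_mem_span {n d : ℕ} {P Q : MvPolynomial (Fin n) ℝ}
    (hP : P.IsHomogeneous d) (hQ : Q.IsHomogeneous d) {V : Submodule ℝ (EuclideanSpace ℝ (Fin n))}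
    (hsym : ∀ x : EuclideanSpace ℝ (Fin n), ∀ y ∈ V, polyFun P (x + y) = polyFun P x)
    {x : EuclideanSpace ℝ (Fin n)} (hPQ : ∀ y, polyFun P y = polyFun Q (y - x)) :
    ∀ v ∈ Submodule.span ℝ ((V : Set (EuclideanSpace ℝ (Fin n))) ∪ {x}),
      ∀ y, polyFun P (y + v) = polyFun P y := by
  have hx : x ∈ periodSubmodule (polyFun P) (polyFun_smul hP) :=
    mem_periodSubmodule_of_homogeneous_about (continuous_polyFun P) (polyFun_smul hP) fun c z => by
      simp only [hPQ, add_sub_cancel_left, polyFun_smul hQ]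
  have hV : V ≤ periodSubmodule (polyFun P) (polyFun_smul hP) := fun v hv =>
    mem_periodSubmodule.mpr fun y => hsym y v hv
  exact fun v hv => Submodule.span_le.mpr (Set.union_subset hV (Set.singleton_subset_iff.mpr hx)) hv

/-- Precise cone-splitting for homogeneous harmonic polynomials: (1) a nonzero
homogeneous harmonic polynomial has degree 1 iff it is `(n-1)`-symmetric; (2) if it is not
`(n-1)`-symmetric, is invariant under a `k`-dimensional subspace `V`, and is also homogeneous
with respect to some point `x ∉ V`, then it is invariant under `span(V ∪ {x})`, and in
particular `(k+1)`-symmetric. -/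
theorem poly_cone_splitting {n : ℕ} (hn : 2 ≤ n)
    (P : MvPolynomial (Fin n) ℝ) (hP : P ≠ 0)
    (d : ℕ) (hd : 1 ≤ d) (hhom : P.IsHomogeneous d)
    (hharm : ∀ z : EuclideanSpace ℝ (Fin n), laplacian (polyFun P) z = 0)
    (k : ℕ) (V : Submodule ℝ (EuclideanSpace ℝ (Fin n))) (hV : finrank ℝ V = k)
    (hsym : ∀ x : EuclideanSpace ℝ (Fin n), ∀ y ∈ V, polyFun P (x + y) = polyFun P x) :
    (d = 1 ↔ IsKSymmetricPoly P (n - 1)) ∧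
      (¬ IsKSymmetricPoly P (n - 1) →
        ∀ x : EuclideanSpace ℝ (Fin n), x ∉ V →
          (∃ Q : MvPolynomial (Fin n) ℝ, Q.IsHomogeneous d ∧
            ∀ y : EuclideanSpace ℝ (Fin n), polyFun P y = polyFun Q (y - x)) →
          (∀ v ∈ Submodule.span ℝ ((V : Set (EuclideanSpace ℝ (Fin n))) ∪ {x}),
              ∀ y : EuclideanSpace ℝ (Fin n), polyFun P (y + v) = polyFun P y) ∧
            IsKSymmetricPoly P (k + 1)) := by
  refine ⟨⟨fun h1 => isKSymmetricPoly_of_isHomogeneous_one hP (h1 ▸ hhom),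
    eq_one_of_isKSymmetricPoly_sub_one (by omega) hP hd hhom hharm⟩, ?_⟩
  rintro - x hxV ⟨Q, hQ, hPQ⟩
  have hinv := polyFun_add_eq_of_mem_span hhom hQ hsym hPQ
  exact ⟨hinv, ⟨d, hhom⟩, _, by rw [Submodule.finrank_span_union_singleton hxV, hV],
    fun y v hv => hinv v hv y⟩
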